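/- Let l ≥ 1 be a natural number, let p be a prime with p > l + 1, and let x, r be natural numbers with x < 2^l and r < 2^l. For each j with 0 ≤ j < l define c_j = 1 − (x_j − r_j) + Σ_{k=j+1}^{l−1} (x_k XOR r_k) as an integer, where x_k, r_k ∈ {0,1} are the k-th binary digits of x and r (bit l−1 most significant). Then x > r if and only if there exists j with 0 ≤ j < l such that the image of c_j in ZMod p is zero. -/

import Mathlib

/-!
Each `c_j` lies in `[0, l + 1]`, so for `p > l + 1` it vanishes in `ZMod p` exactly when it
vanishes in `ℤ`. Since the sum of `XOR`s is nonnegative, `c_j = 0` forces `x_j - r_j = 1` and all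
higher bits of `x` and `r` to agree, i.e. `j` is the most significant bit where `x` and `r` differ
and there `x` has the `1`: this is the usual characterisation of `r < x`.
-/

open Finset

theorem ZMod.intCast_eq_zero_iff_of_nonneg_of_lt {n : ℕ} {a : ℤ} (h₀ : 0 ≤ a) (h : a < n) :
    (a : ZMod n) = 0 ↔ a = 0 := by
  rw [ZMod.intCast_zmod_eq_zero_iff_dvd]
  exact ⟨Int.eq_zero_of_dvd_of_nonneg_of_lt h₀ h, fun ha => ha ▸ dvd_zero _⟩

namespace Nat

theorem lt_iff_exists_testBit {m n : ℕ} :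
    m < n ↔ ∃ i, n.testBit i = true ∧ m.testBit i = false ∧
      ∀ j, i < j → n.testBit j = m.testBit j := by
  refine ⟨fun hmn => ?_, fun ⟨i, hn, hm, hhigh⟩ =>
    lt_of_testBit i hm hn fun j hj => (hhigh j hj).symm⟩
  have hxor : m ^^^ n ≠ 0 := fun h => hmn.ne (xor_eq_zero_iff.mp h)
  obtain ⟨i, hi, hhigh⟩ := exists_most_significant_bit hxor
  simp only [testBit_xor, bne_eq_false_iff_eq] at hi hhigh
  have hbits : n.testBit i = true ∧ m.testBit i = false := by
    cases hmi : m.testBit i <;> cases hni : n.testBit i <;>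
      simp only [hmi, hni, bne_self_eq_false, Bool.bne_true, Bool.bne_false, Bool.not_false,
        Bool.false_eq_true, Bool.true_eq_false, and_self] at hi ⊢
    · exact absurd (lt_of_testBit i hni hmi fun j hj => (hhigh j hj).symm) hmn.not_gt
  exact ⟨i, hbits.1, hbits.2, fun j hj => (hhigh j hj).symm⟩

theorem lt_iff_exists_testBit_of_lt_two_pow {l m n : ℕ} (hm : m < 2 ^ l) (hn : n < 2 ^ l) :
    m < n ↔ ∃ i < l, n.testBit i = true ∧ m.testBit i = false ∧
      ∀ j ∈ Ico (i + 1) l, n.testBit j = m.testBit j := by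
  have hhigh_false : ∀ {a j}, a < 2 ^ l → l ≤ j → a.testBit j = false := fun ha hj =>
    testBit_lt_two_pow (ha.trans_le (Nat.pow_le_pow_right two_pos hj))
  rw [lt_iff_exists_testBit]
  refine exists_congr fun i =>
    ⟨fun ⟨hni, hmi, hhigh⟩ => ?_, fun ⟨_, hni, hmi, hhigh⟩ => ?_⟩
  · have hil : i < l :=
      (Nat.pow_lt_pow_iff_right one_lt_two).mp ((ge_two_pow_of_testBit hni).trans_lt hn)
    exact ⟨hil, hni, hmi, fun j hj => hhigh j (mem_Ico.mp hj).1⟩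
  · refine ⟨hni, hmi, fun j hij => ?_⟩
    by_cases hjl : j < l
    · exact hhigh j (mem_Ico.mpr ⟨hij, hjl⟩)
    · rw [hhigh_false hn (not_lt.mp hjl), hhigh_false hm (not_lt.mp hjl)]

end Nat

/-- The value `c_j` of Algorithm 5. -/
def comparisonTerm (x r j l : ℕ) : ℤ :=
  1 - ((if Nat.testBit x j then (1 : ℤ) else 0) - (if Nat.testBit r j then (1 : ℤ) else 0)) +
    ∑ k ∈ Ico (j + 1) l, (if Nat.testBit x k ≠ Nat.testBit r k then (1 : ℤ) else 0)

theorem comparisonTerm_eq (x r j l : ℕ) :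
    comparisonTerm x r j l =
      1 - ((if x.testBit j then (1 : ℤ) else 0) - (if r.testBit j then (1 : ℤ) else 0)) +
        #{k ∈ Ico (j + 1) l | x.testBit k ≠ r.testBit k} := by
  rw [comparisonTerm, sum_boole]

theorem comparisonTerm_nonneg (x r j l : ℕ) : 0 ≤ comparisonTerm x r j l := by
  rw [comparisonTerm_eq]
  split_ifs <;> omega

theorem comparisonTerm_le {x r j l : ℕ} (hj : j < l) : comparisonTerm x r j l ≤ l + 1 := by
  have hcard := card_filter_le (Ico (j + 1) l) fun k => x.testBit k ≠ r.testBit k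
  rw [Nat.card_Ico] at hcard
  rw [comparisonTerm_eq]
  split_ifs <;> omega

theorem comparisonTerm_eq_zero_iff {x r j l : ℕ} :
    comparisonTerm x r j l = 0 ↔ x.testBit j = true ∧ r.testBit j = false ∧
      ∀ k ∈ Ico (j + 1) l, x.testBit k = r.testBit k := by
  have hagree : #{k ∈ Ico (j + 1) l | x.testBit k ≠ r.testBit k} = 0 ↔
      ∀ k ∈ Ico (j + 1) l, x.testBit k = r.testBit k := by
    simp only [card_eq_zero, filter_eq_empty_iff, not_not]
  rw [comparisonTerm_eq, ← hagree]
  generalize #{k ∈ Ico (j + 1) l | x.testBit k ≠ r.testBit k} = s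
  cases x.testBit j <;> cases r.testBit j <;>
    simp only [Bool.false_eq_true, Bool.true_eq_false, ↓reduceIte, true_and, false_and,
      iff_false] <;> omega

theorem bitwise_comparison_mod_p_correct_general
    (l p x r : ℕ) (hpl : l + 1 < p)
    (hx : x < 2 ^ l) (hr : r < 2 ^ l)
    (c : ℕ → ℤ)
    (hc : ∀ j < l,
      c j = 1 - ((if Nat.testBit x j then (1 : ℤ) else 0) -
                 (if Nat.testBit r j then (1 : ℤ) else 0)) +
            ∑ k ∈ Finset.Ico (j + 1) l,
              (if Nat.testBit x k ≠ Nat.testBit r k then (1 : ℤ) else 0)) :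
    x > r ↔ ∃ j < l, ((c j : ℤ) : ZMod p) = 0 := by
  have hc : ∀ j < l, c j = comparisonTerm x r j l := hc
  rw [gt_iff_lt, Nat.lt_iff_exists_testBit_of_lt_two_pow hr hx]
  refine exists_congr fun j => and_congr_right fun hj => ?_
  have hlt : comparisonTerm x r j l < p := by
    have := comparisonTerm_le (x := x) (r := r) hj
    omega
  rw [hc j hj, ZMod.intCast_eq_zero_iff_of_nonneg_of_lt (comparisonTerm_nonneg x r j l) hlt,
    comparisonTerm_eq_zero_iff]

/-- Correctness of the zero-check over `Z_p` in Algorithm 5: since each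
`c_j = 1 - (x_j - r_j) + Σ_{k=j+1}^{l-1} (x_k ⊕ r_k)` lies between `0` and
`l + 1`, for a prime `p > l + 1` vanishing modulo `p` coincides with
vanishing over the integers, so `x > r` iff some `c_j` is zero in `ZMod p`. -/
theorem bitwise_comparison_mod_p_correct
    (l p x r : ℕ) (hl : 1 ≤ l) (hp : p.Prime) (hpl : l + 1 < p)
    (hx : x < 2 ^ l) (hr : r < 2 ^ l)
    (c : ℕ → ℤ)
    (hc : ∀ j < l,
      c j = 1 - ((if Nat.testBit x j then (1 : ℤ) else 0) -
                 (if Nat.testBit r j then (1 : ℤ) else 0)) +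
            ∑ k ∈ Finset.Ico (j + 1) l,
              (if Nat.testBit x k ≠ Nat.testBit r k then (1 : ℤ) else 0)) :
    x > r ↔ ∃ j < l, ((c j : ℤ) : ZMod p) = 0 :=
  bitwise_comparison_mod_p_correct_general l p x r hpl hx hr c hc
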